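/- arXiv:2402.15362 — 2 statements merged into one kernel-verified Lean document; each statement's English description precedes it below -/
import Mathlib

section
/- Let G be a finite abelian p-group and H ≤ G a subgroup. Then the minimal number of generators of G is at most the minimal number of generators of H plus log_p of the index [G : H]. -/
/-!
Generators of `H` together with lifts of generators of `G ⧸ H` generate `G`, so
`rank G ≤ rank H + rank (G ⧸ H)`. The quotient has order `p ^ k`, and an abelian group of order
`p ^ k` has rank at most `k`: split off a cyclic subgroup of order `p` and induct on `k`.
-/

open Subgroup

namespace Group

theorem rank_le_one_of_isCyclic {G : Type*} [Group G] [FG G] [IsCyclic G] : rank G ≤ 1 := by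
  obtain ⟨g, hg⟩ := isCyclic_iff_exists_zpowers_eq_top.mp ‹IsCyclic G›
  simpa using rank_le (S := {g}) (by rwa [Finset.coe_singleton, ← zpowers_eq_closure])

theorem rank_le_rank_add_rank_quotient {G : Type*} [Group G] [FG G] (N : Subgroup G) [N.Normal]
    [FG N] : rank G ≤ rank N + rank (G ⧸ N) := by
  classical
  obtain ⟨S, hS_card, hS⟩ := rank_spec N
  obtain ⟨T, hT_card, hT⟩ := rank_spec (G ⧸ N)
  choose lift hlift using QuotientGroup.mk_surjective (s := N)
  set U : Finset G := S.image N.subtype ∪ T.image lift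
  have hN_le : N ≤ closure (U : Set G) := by
    calc N = (closure (S : Set N)).map N.subtype := by
          rw [hS, ← MonoidHom.range_eq_map, N.range_subtype]
      _ = closure (N.subtype '' S) := MonoidHom.map_closure _ _
      _ ≤ closure (U : Set G) := closure_mono (by
          rw [Finset.coe_union, Finset.coe_image]; exact Set.subset_union_left)
  have hU_map : (closure (U : Set G)).map (QuotientGroup.mk' N) = ⊤ := by
    rw [MonoidHom.map_closure, eq_top_iff, ← hT]
    refine closure_mono ?_
    intro t ht
    exact ⟨lift t, Finset.mem_union_right _ (Finset.mem_image_of_mem lift ht), hlift t⟩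
  have hU : closure (U : Set G) = ⊤ := by
    have hker : (QuotientGroup.mk' N).ker ≤ closure (U : Set G) := by
      rwa [QuotientGroup.ker_mk']
    rw [← comap_map_eq_self hker, hU_map, comap_top]
  calc rank G ≤ U.card := rank_le hU
    _ ≤ S.card + T.card :=
      (Finset.card_union_le _ _).trans (add_le_add Finset.card_image_le Finset.card_image_le)
    _ = rank N + rank (G ⧸ N) := by rw [hS_card, hT_card]

theorem rank_le_of_card_eq_prime_pow {p : ℕ} (hp : p.Prime) {k : ℕ} {Q : Type*} [CommGroup Q]
    [Finite Q] (hQ : Nat.card Q = p ^ k) : rank Q ≤ k := by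
  induction k generalizing Q with
  | zero =>
    have : Subsingleton Q := (Nat.card_eq_one_iff_unique.mp hQ).1
    exact (rank_eq_zero Q).le
  | succ n ih =>
    have := Fact.mk hp
    obtain ⟨g, hg⟩ := exists_prime_orderOf_dvd_card' p (hQ ▸ dvd_pow_self p n.succ_ne_zero)
    have hcard : Nat.card (Q ⧸ zpowers g) = p ^ n := by
      have hindex := (zpowers g).index_mul_card
      rw [Nat.card_zpowers, hg, hQ, pow_succ] at hindex
      exact Nat.eq_of_mul_eq_mul_right hp.pos hindex
    calc rank Q ≤ rank (zpowers g) + rank (Q ⧸ zpowers g) := rank_le_rank_add_rank_quotient _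
      _ ≤ 1 + n := add_le_add rank_le_one_of_isCyclic (ih hcard)
      _ = n + 1 := add_comm 1 n

end Group

theorem stmt_0_general (p : ℕ) (hp : p.Prime) (G : Type*) [CommGroup G] [Finite G]
    (H : Subgroup G) (k : ℕ) (hk : H.index = p ^ k) :
    Group.rank G ≤ Group.rank H + k :=
  (Group.rank_le_rank_add_rank_quotient H).trans
    (Nat.add_le_add_left (Group.rank_le_of_card_eq_prime_pow hp (H.index_eq_card ▸ hk)) _)

/-- For a finite abelian `p`-group `G` and a subgroup `H ≤ G`,
`rank G ≤ rank H + log_p [G : H]`, where `[G : H] = p ^ log_p [G : H]`. -/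
theorem stmt_0 (p : ℕ) (hp : p.Prime) (G : Type*) [CommGroup G] [Finite G]
    (hG : IsPGroup p G) (H : Subgroup G) (k : ℕ) (hk : H.index = p ^ k) :
    Group.rank G ≤ Group.rank H + k :=
  stmt_0_general p hp G H k hk
end

section
/- Let α : A → A' be an isogeny of complex abelian varieties with kernel G, and suppose α factors as A → A/L → A' where L ≤ G. If there exist isogenies f1 : A1 → A' and f2 : A2 → A' with essential dimensions e1 and e2 such that A is birational to the fiber product A1 ×_{A'} A2, then ed(α) ≤ e1 + e2. -/
open IntermediateField

/-- `EdLE F K L m` means that the (generically finite) cover corresponding to the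
field extension `L / K` (both intermediate fields of `F / ℂ`, thought of as function
fields of complex varieties) is, birationally, pulled back from a finite cover
`L₀ / K₀` of varieties of dimension at most `m`. -/
def EdLE (F : Type*) [Field F] [Algebra ℂ F] (K L : IntermediateField ℂ F)
    (m : ℕ) : Prop :=
  ∃ (K₀ L₀ : IntermediateField ℂ F) (_ : K₀ ≤ K) (h₂ : K₀ ≤ L₀) (_ : L₀ ≤ L),
    FiniteDimensional K₀ (extendScalars h₂) ∧ K ⊔ L₀ = L ∧
    ∃ (s : Finset F) (hs : adjoin ℂ (s : Set F) ≤ K₀), s.card ≤ m ∧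
      Algebra.IsAlgebraic (adjoin ℂ (s : Set F)) (extendScalars hs)

/-- The essential dimension of the cover corresponding to the field extension
`L / K` of function fields over `ℂ`. -/
noncomputable def essDim (F : Type*) [Field F] [Algebra ℂ F]
    (K L : IntermediateField ℂ F) : ℕ :=
  sInf {m | EdLE F K L m}

section Helpers

variable {F : Type*} [Field F] [Algebra ℂ F]

lemma extend_congr {K₀ A B : IntermediateField ℂ F} (hAB : A = B) (hA : K₀ ≤ A) :
    extendScalars hA = extendScalars (hAB ▸ hA : K₀ ≤ B) := by subst hAB; rfl

/-- If `A = B ⊔ ℂ(T)` then, as an intermediate field of `F / B`, `A` is `B(T)`. -/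
lemma extend_eq_adjoin {B A : IntermediateField ℂ F} (T : Set F) (hBA : B ≤ A)
    (h : B ⊔ adjoin ℂ T = A) : extendScalars hBA = adjoin ↥B T := by
  have h2 : A = restrictScalars ℂ (adjoin ↥B T) := by
    rw [restrictScalars_adjoin_eq_sup, h]
  rw [extend_congr h2 hBA]
  rfl

/-- Integrality over an intermediate field is preserved by enlarging the field. -/
lemma isIntegral_of_le {K' K'' : IntermediateField ℂ F} (h : K' ≤ K'') {x : F}
    (hx : IsIntegral K' x) : IsIntegral K'' x := by
  obtain ⟨p, hm, hp⟩ := hx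
  refine ⟨p.map (inclusion h).toRingHom, hm.map _, ?_⟩
  have hcomp : (algebraMap ↥K'' F).comp (inclusion h).toRingHom = algebraMap ↥K' F :=
    RingHom.ext fun a => rfl
  rw [Polynomial.eval₂_map, hcomp]
  exact hp

/-- An element of an algebraic extension `L' / K'` is integral over `K'`. -/
lemma isIntegral_of_mem {K' L' : IntermediateField ℂ F} (h : K' ≤ L')
    (halg : Algebra.IsAlgebraic K' (extendScalars h)) {x : F} (hx : x ∈ L') :
    IsIntegral K' x := by
  have h1 : IsAlgebraic ↥K' (⟨x, hx⟩ : extendScalars h) := halg.isAlgebraic _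
  exact (IntermediateField.isAlgebraic_iff.mp h1).isIntegral

/-- A finite-dimensional extension of intermediate fields is finitely generated. -/
lemma exists_finset_of_fd {K' L' : IntermediateField ℂ F} (h : K' ≤ L')
    (hfd : FiniteDimensional K' (extendScalars h)) :
    ∃ t : Finset F, adjoin ↥K' (t : Set F) = extendScalars h := by
  apply IntermediateField.fg_of_fg_toSubalgebra
  apply Subalgebra.fg_of_fg_toSubmodule
  exact (Submodule.fg_iff_finiteDimensional _).2 hfd

/-- Key step for the existence lemma: every element `x ∈ F` integral over `K` is
integral over any intermediate field containing the coefficients of its minimal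
polynomial over `K`. -/
lemma isIntegral_adjoin_coeffs {K K₀ : IntermediateField ℂ F} {x : F}
    (hx : IsIntegral K x)
    (hc : ∀ n, ((minpoly ↥K x).coeff n : F) ∈ K₀) : IsIntegral K₀ x := by
  set p := minpoly ↥K x with hp
  set q : Polynomial F := p.map (algebraMap ↥K F) with hq
  have hqc : (↑q.coeffs : Set F) ⊆ (K₀.toSubfield.toSubring : Set F) := by
    intro c hcq
    rcases Polynomial.mem_coeffs_iff.mp (Finset.mem_coe.mp hcq) with ⟨n, _, hn⟩
    rw [hn, Polynomial.coeff_map]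
    exact hc n
  refine ⟨q.toSubring K₀.toSubfield.toSubring hqc, ?_, ?_⟩
  · exact (Polynomial.monic_toSubring _ _ _).2 ((minpoly.monic hx).map _)
  · have hsub : (algebraMap ↥K₀ F) = K₀.toSubfield.toSubring.subtype :=
      RingHom.ext fun a => rfl
    rw [Polynomial.eval₂_eq_eval_map, hsub, Polynomial.map_toSubring, hq,
      Polynomial.eval_map, ← Polynomial.aeval_def]
    exact minpoly.aeval _ _

/-- Nonemptiness: a finite cover has *some* essential-dimension bound. -/
lemma edle_exists {K L : IntermediateField ℂ F} (h : K ≤ L)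
    (hfd : FiniteDimensional K (extendScalars h)) : ∃ m, EdLE F K L m := by
  classical
  obtain ⟨t, ht⟩ := exists_finset_of_fd h hfd
  have halg : Algebra.IsAlgebraic ↥K (extendScalars h) :=
    Algebra.IsAlgebraic.of_finite _ _
  have htL : ∀ x ∈ t, x ∈ L := fun x hx => by
    have : x ∈ extendScalars h := ht ▸ subset_adjoin _ _ hx
    exact this
  have hint : ∀ x ∈ t, IsIntegral ↥K x := fun x hx =>
    isIntegral_of_mem h halg (htL x hx)
  -- the coefficients of the minimal polynomials of elements of `t`
  set s : Finset F :=
    t.biUnion (fun x => Finset.image (fun a : ↥K => (a : F)) (minpoly ↥K x).coeffs) with hs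
  set K₀ : IntermediateField ℂ F := adjoin ℂ (s : Set F) with hK₀
  have hK₀K : K₀ ≤ K := by
    rw [hK₀]
    apply adjoin_le_iff.2
    intro c hcs
    rcases Finset.mem_biUnion.mp hcs with ⟨x, _, hcx⟩
    rcases Finset.mem_image.mp hcx with ⟨a, _, ha⟩
    exact ha ▸ a.2
  have hintK₀ : ∀ x ∈ (t : Set F), IsIntegral ↥K₀ x := by
    intro x hx
    refine isIntegral_adjoin_coeffs (hint x hx) fun n => ?_
    by_cases h0 : (minpoly ↥K x).coeff n = 0
    · rw [h0]; simpa using K₀.zero_mem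
    · apply subset_adjoin
      exact Finset.mem_coe.mpr (Finset.mem_biUnion.mpr ⟨x, hx,
        Finset.mem_image.mpr ⟨(minpoly ↥K x).coeff n,
          (Polynomial.mem_coeffs_iff).mpr
            ⟨n, Polynomial.mem_support_iff.mpr h0, rfl⟩, rfl⟩⟩)
  have hKadj : K ⊔ adjoin ℂ (t : Set F) = L := by
    have h1 := restrictScalars_adjoin_eq_sup ℂ K (t : Set F)
    rw [ht] at h1
    exact h1.symm.trans (extendScalars_restrictScalars h)
  refine ⟨s.card, K₀, K₀ ⊔ adjoin ℂ (t : Set F), hK₀K, le_sup_left,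
    sup_le (hK₀K.trans h) (adjoin_le_iff.2 htL), ?_, ?_, s, le_refl _, le_refl _, ?_⟩
  · rw [extend_eq_adjoin (t : Set F) le_sup_left rfl]
    exact finiteDimensional_adjoin hintK₀
  · rw [← sup_assoc, sup_eq_left.2 hK₀K, hKadj]
  · constructor
    rintro ⟨y, hy⟩
    rw [IntermediateField.isAlgebraic_iff]
    exact isAlgebraic_algebraMap (⟨y, hy⟩ : ↥(adjoin ℂ (s : Set F)))

/-- Subadditivity of the `EdLE` bound under compositum. -/
lemma edle_sup {K L₁ L₂ : IntermediateField ℂ F} {m₁ m₂ : ℕ}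
    (H₁ : EdLE F K L₁ m₁) (H₂ : EdLE F K L₂ m₂) :
    EdLE F K (L₁ ⊔ L₂) (m₁ + m₂) := by
  classical
  obtain ⟨K₁, M₁, hK₁, hKM₁, hM₁, hfd₁, hsup₁, s₁, hs₁, hcard₁, halg₁⟩ := H₁
  obtain ⟨K₂, M₂, hK₂, hKM₂, hM₂, hfd₂, hsup₂, s₂, hs₂, hcard₂, halg₂⟩ := H₂
  obtain ⟨t₁, ht₁⟩ := exists_finset_of_fd hKM₁ hfd₁
  obtain ⟨t₂, ht₂⟩ := exists_finset_of_fd hKM₂ hfd₂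
  have hM₁eq : K₁ ⊔ adjoin ℂ (t₁ : Set F) = M₁ := by
    have h1 := restrictScalars_adjoin_eq_sup ℂ K₁ (t₁ : Set F)
    rw [ht₁] at h1
    exact h1.symm.trans (extendScalars_restrictScalars hKM₁)
  have hM₂eq : K₂ ⊔ adjoin ℂ (t₂ : Set F) = M₂ := by
    have h1 := restrictScalars_adjoin_eq_sup ℂ K₂ (t₂ : Set F)
    rw [ht₂] at h1
    exact h1.symm.trans (extendScalars_restrictScalars hKM₂)
  have hint₁ : ∀ x ∈ (t₁ : Set F), IsIntegral ↥(K₁ ⊔ K₂) x := by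
    intro x hx
    refine isIntegral_of_le le_sup_left (isIntegral_of_mem hKM₁
      (Algebra.IsAlgebraic.of_finite ↥K₁ (extendScalars hKM₁)) ?_)
    exact (ht₁ ▸ subset_adjoin _ _ hx : x ∈ extendScalars hKM₁)
  have hint₂ : ∀ x ∈ (t₂ : Set F), IsIntegral ↥(K₁ ⊔ K₂) x := by
    intro x hx
    refine isIntegral_of_le le_sup_right (isIntegral_of_mem hKM₂
      (Algebra.IsAlgebraic.of_finite ↥K₂ (extendScalars hKM₂)) ?_)
    exact (ht₂ ▸ subset_adjoin _ _ hx : x ∈ extendScalars hKM₂)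
  have hSle : adjoin ℂ (↑(s₁ ∪ s₂) : Set F) ≤ K₁ ⊔ K₂ := by
    rw [Finset.coe_union, adjoin_union]
    exact sup_le (hs₁.trans le_sup_left) (hs₂.trans le_sup_right)
  refine ⟨K₁ ⊔ K₂, M₁ ⊔ M₂, sup_le hK₁ hK₂, sup_le_sup hKM₁ hKM₂,
    sup_le_sup hM₁ hM₂, ?_, ?_, s₁ ∪ s₂, hSle, ?_, ?_⟩
  · -- finite dimensionality of `M₁ ⊔ M₂` over `K₁ ⊔ K₂`
    have hsupeq : (K₁ ⊔ K₂) ⊔ adjoin ℂ ((t₁ : Set F) ∪ (t₂ : Set F)) = M₁ ⊔ M₂ := by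
      rw [adjoin_union, sup_sup_sup_comm, hM₁eq, hM₂eq]
    rw [extend_eq_adjoin _ (sup_le_sup hKM₁ hKM₂) hsupeq]
    have : Finite ↥((t₁ : Set F) ∪ (t₂ : Set F)) := by
      rw [← Finset.coe_union]; infer_instance
    exact finiteDimensional_adjoin (fun x hx => hx.elim (hint₁ x) (hint₂ x))
  · -- `K ⊔ (M₁ ⊔ M₂) = L₁ ⊔ L₂`
    rw [sup_sup_distrib_left, hsup₁, hsup₂]
  · -- cardinality bound
    exact (Finset.card_union_le _ _).trans (add_le_add hcard₁ hcard₂)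
  · -- `K₁ ⊔ K₂` is algebraic over `ℂ(s₁ ∪ s₂)`
    set S : IntermediateField ℂ F := adjoin ℂ (↑(s₁ ∪ s₂) : Set F) with hS
    have hS₁ : adjoin ℂ (s₁ : Set F) ≤ S := by
      rw [hS]; exact adjoin.mono _ _ _ (by rw [Finset.coe_union]; exact Set.subset_union_left)
    have hS₂ : adjoin ℂ (s₂ : Set F) ≤ S := by
      rw [hS]; exact adjoin.mono _ _ _ (by rw [Finset.coe_union]; exact Set.subset_union_right)
    have hintS : ∀ x ∈ ((K₁ : Set F) ∪ (K₂ : Set F)), IsIntegral ↥S x := by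
      rintro x (hx | hx)
      · exact isIntegral_of_le hS₁ (isIntegral_of_mem hs₁ halg₁ hx)
      · exact isIntegral_of_le hS₂ (isIntegral_of_mem hs₂ halg₂ hx)
    have hsupeq : S ⊔ adjoin ℂ ((K₁ : Set F) ∪ (K₂ : Set F)) = K₁ ⊔ K₂ := by
      rw [adjoin_union, adjoin_self, adjoin_self]
      exact sup_eq_right.2 hSle
    rw [extend_eq_adjoin _ hSle hsupeq]
    exact isAlgebraic_adjoin hintS

end Helpers

/-- subadditivity of essential dimension under fiber products.  If the
isogeny (finite cover) `α : A → A'` is birationally the fiber product of two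
isogenies `f₁ : A₁ → A'` and `f₂ : A₂ → A'` of essential dimensions `e₁`, `e₂`, then
`ed(α) ≤ e₁ + e₂`.  In terms of function fields over `ℂ`: if `F = ff(A)`,
`K = ff(A') ≤ Lᵢ = ff(Aᵢ) ≤ F` with `Lᵢ / K` finite and `F = L₁ ⊔ L₂` (i.e. `A` is
birational to `A₁ ×_{A'} A₂`), then `ed(F/K) ≤ ed(L₁/K) + ed(L₂/K)`. -/
theorem stmt_15 (F : Type*) [Field F] [Algebra ℂ F]
    (K L₁ L₂ : IntermediateField ℂ F) (h₁ : K ≤ L₁) (h₂ : K ≤ L₂)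
    (hf₁ : FiniteDimensional K (extendScalars h₁))
    (hf₂ : FiniteDimensional K (extendScalars h₂))
    (hprod : L₁ ⊔ L₂ = ⊤)
    (e₁ e₂ : ℕ) (he₁ : essDim F K L₁ = e₁) (he₂ : essDim F K L₂ = e₂) :
    essDim F K ⊤ ≤ e₁ + e₂ := by
  have H₁ : EdLE F K L₁ e₁ := by
    rw [← he₁]
    exact Nat.sInf_mem (edle_exists h₁ hf₁)
  have H₂ : EdLE F K L₂ e₂ := by
    rw [← he₂]
    exact Nat.sInf_mem (edle_exists h₂ hf₂)
  have H : EdLE F K ⊤ (e₁ + e₂) := hprod ▸ edle_sup H₁ H₂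
  exact Nat.sInf_le H
end
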